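/- arXiv:1112.4549 — 2 statements merged into one kernel-verified Lean document; each statement's English description precedes it below -/
import Mathlib

section
/- Let Λ be a finitely aligned k-graph, let (μ, ν) be a generalised cycle in Λ with an entrance τ, and let {t_λ : λ ∈ Λ} be a Cuntz–Krieger Λ-family in a C*-algebra B with t_{s(τ)} ≠ 0. Then t_ν t_ν* is an infinite projection: the element w := t_ν t_μ* is a partial isometry with w*w = t_μ t_μ* and ww* = t_ν t_ν*, and t_μ t_μ* ≤ t_ν t_ν* with t_μ t_μ* ≠ t_ν t_ν* (indeed t_ν t_ν* − t_μ t_μ* ≥ t_{ντ} t_{ντ}* > 0). -/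
open scoped ComplexOrder ENat

/-- A higher-rank graph (`k`-graph): a countable small category `Λ` together with a degree
functor `d : Λ → ℕᵏ` satisfying the unique factorisation property.  Morphisms ("paths") form
the type `Path`; vertices are identified with the paths of degree `0`.  Composition is encoded
as a total function `comp` whose axioms only apply to composable pairs (`s μ = r ν`). -/
structure KGraph (k : ℕ) : Type 1 where
  Path : Type
  countable : Countable Path
  d : Path → Fin k → ℕ
  r : Path → Path
  s : Path → Path
  comp : Path → Path → Path
  d_r : ∀ lam, d (r lam) = 0
  d_s : ∀ lam, d (s lam) = 0
  r_vertex : ∀ v, d v = 0 → r v = v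
  s_vertex : ∀ v, d v = 0 → s v = v
  r_comp : ∀ mu nu, s mu = r nu → r (comp mu nu) = r mu
  s_comp : ∀ mu nu, s mu = r nu → s (comp mu nu) = s nu
  d_comp : ∀ mu nu, s mu = r nu → d (comp mu nu) = d mu + d nu
  comp_assoc : ∀ lam mu nu, s lam = r mu → s mu = r nu →
    comp (comp lam mu) nu = comp lam (comp mu nu)
  id_comp : ∀ lam, comp (r lam) lam = lam
  comp_id : ∀ lam, comp lam (s lam) = lam
  factor : ∀ (lam : Path) (m n : Fin k → ℕ), d lam = m + n →
    ∃! p : Path × Path, d p.1 = m ∧ d p.2 = n ∧ s p.1 = r p.2 ∧ comp p.1 p.2 = lam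

namespace KGraph

variable {k : ℕ} (Λ : KGraph k)

/-- `v` is a vertex, i.e. a path of degree `0`. -/
def IsVertex (v : Λ.Path) : Prop := Λ.d v = 0

/-- The set of minimal common extensions of `mu` and `nu`. -/
def MCE (mu nu : Λ.Path) : Set Λ.Path :=
  {lam | Λ.d lam = Λ.d mu ⊔ Λ.d nu ∧
    (∃ α, Λ.s mu = Λ.r α ∧ Λ.comp mu α = lam) ∧
    (∃ β, Λ.s nu = Λ.r β ∧ Λ.comp nu β = lam)}

/-- Pairs `(α, β)` with `μα = νβ ∈ MCE (μ, ν)`. -/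
def MCEPairs (mu nu : Λ.Path) : Set (Λ.Path × Λ.Path) :=
  {p | Λ.s mu = Λ.r p.1 ∧ Λ.s nu = Λ.r p.2 ∧
    Λ.comp mu p.1 = Λ.comp nu p.2 ∧ Λ.comp mu p.1 ∈ Λ.MCE mu nu}

/-- `Λ` is finitely aligned if all sets of minimal common extensions are finite. -/
def FinitelyAligned : Prop := ∀ mu nu : Λ.Path, (Λ.MCE mu nu).Finite

/-- `Λ` is row-finite if `vΛⁿ` is finite for every vertex `v` and `n ∈ ℕᵏ`. -/
def RowFinite : Prop :=
  ∀ (v : Λ.Path) (n : Fin k → ℕ), Λ.IsVertex v → {lam | Λ.r lam = v ∧ Λ.d lam = n}.Finite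

/-- `Λ` is locally convex. -/
def LocallyConvex : Prop :=
  ∀ i j : Fin k, i ≠ j → ∀ mu : Λ.Path, Λ.d mu = Pi.single i 1 →
    (∃ e, Λ.r e = Λ.r mu ∧ Λ.d e = Pi.single j 1) →
    ∃ e, Λ.r e = Λ.s mu ∧ Λ.d e = Pi.single j 1

/-- A subset `F ⊆ vΛ` is exhaustive if every `λ ∈ vΛ` has a common extension with some
member of `F`. -/
def Exhaustive (v : Λ.Path) (F : Set Λ.Path) : Prop :=
  ∀ lam, Λ.r lam = v → ∃ mu ∈ F, (Λ.MCE lam mu).Nonempty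

/-- A generalised cycle: a pair of distinct paths `μ ≠ ν` with the same range and source such
that every extension of `μ` has a common extension with `ν`. -/
def IsGenCycle (mu nu : Λ.Path) : Prop :=
  mu ≠ nu ∧ Λ.s mu = Λ.s nu ∧ Λ.r mu = Λ.r nu ∧
    ∀ τ, Λ.r τ = Λ.s mu → (Λ.MCE (Λ.comp mu τ) nu).Nonempty

/-- An entrance to the generalised cycle `(μ, ν)`. -/
def IsEntrance (mu nu τ : Λ.Path) : Prop :=
  Λ.r τ = Λ.s nu ∧ Λ.MCE (Λ.comp nu τ) mu = ∅

/-- A (conventional) cycle: a path of nonzero degree whose range and source coincide. -/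
def IsCycle (lam : Λ.Path) : Prop := Λ.d lam ≠ 0 ∧ Λ.r lam = Λ.s lam

/-- `Λ` contains no (conventional) cycles. -/
def NoCycles : Prop := ∀ lam : Λ.Path, Λ.r lam = Λ.s lam → Λ.d lam = 0

/-- A vertex `v` with `vΛ = {v}`. -/
def IsSource (v : Λ.Path) : Prop :=
  Λ.IsVertex v ∧ ∀ lam, Λ.r lam = v → lam = v

/-- `Ext (μ; E)`. -/
def Ext (mu : Λ.Path) (E : Set Λ.Path) : Set Λ.Path :=
  {τ | Λ.r τ = Λ.s mu ∧ ∃ nu ∈ E, Λ.comp mu τ ∈ Λ.MCE mu nu}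

/-- No cycle in `Λ` has an entrance. -/
def NoCycleHasEntrance : Prop :=
  ∀ lam, Λ.IsCycle lam → ∀ τ, Λ.r τ = Λ.r lam → (Λ.MCE τ lam).Nonempty

/-- `x` encodes a path of degree `m ∈ (ℕ ∪ {∞})ᵏ` in `Λ`, i.e. a degree-preserving functor
`Ω_{k,m} → Λ`, recorded as a total function on pairs `(p, q)`; only the values with
`p ≤ q ≤ m` are constrained. -/
def IsPathFun (m : Fin k → ℕ∞) (x : (Fin k → ℕ) → (Fin k → ℕ) → Λ.Path) : Prop :=
  (∀ p q : Fin k → ℕ, p ≤ q → (∀ i, (q i : ℕ∞) ≤ m i) → Λ.d (x p q) = q - p) ∧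
  (∀ p q : Fin k → ℕ, p ≤ q → (∀ i, (q i : ℕ∞) ≤ m i) →
    Λ.r (x p q) = x p p ∧ Λ.s (x p q) = x q q) ∧
  (∀ p q u : Fin k → ℕ, p ≤ q → q ≤ u → (∀ i, (u i : ℕ∞) ≤ m i) →
    Λ.comp (x p q) (x q u) = x p u)

/-- `x` is a boundary path of degree `m`. -/
def IsBoundaryFun (m : Fin k → ℕ∞) (x : (Fin k → ℕ) → (Fin k → ℕ) → Λ.Path) : Prop :=
  Λ.IsPathFun m x ∧
  ∀ p : Fin k → ℕ, (∀ i, (p i : ℕ∞) ≤ m i) →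
    ∀ E : Set Λ.Path, E.Finite → (∀ lam ∈ E, Λ.r lam = x p p) → Λ.Exhaustive (x p p) E →
      ∃ mu ∈ E, (∀ i, ((p i + Λ.d mu i : ℕ) : ℕ∞) ≤ m i) ∧ x p (p + Λ.d mu) = mu

/-- A path function `x` of degree `m` belongs to `Λ^{≤∞}`. -/
def IsLeInftyPath (m : Fin k → ℕ∞) (x : (Fin k → ℕ) → (Fin k → ℕ) → Λ.Path) : Prop :=
  Λ.IsPathFun m x ∧
  ∀ n : Fin k → ℕ, (∀ i, (n i : ℕ∞) ≤ m i) → ∀ i, (n i : ℕ∞) = m i →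
    ∀ e, ¬(Λ.r e = x n n ∧ Λ.d e = Pi.single i 1)

/-- The degree of `τ^∞` for a cycle (or initial cycle) `τ`: `∞` in the coordinates where
`d τ` is nonzero, `0` elsewhere. -/
def degInf (τ : Λ.Path) : Fin k → ℕ∞ := fun i => if Λ.d τ i = 0 then 0 else ⊤

/-- An initial cycle: `r μ = s μ` and `r(μ)Λ^{eᵢ} = ∅` whenever `d(μ)ᵢ = 0`. -/
def IsInitialCycle (mu : Λ.Path) : Prop :=
  Λ.r mu = Λ.s mu ∧
  ∀ i, Λ.d mu i = 0 → ∀ e, ¬(Λ.r e = Λ.r mu ∧ Λ.d e = Pi.single i 1)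

/-- `x` is (the path function of) `μ^∞` for the initial cycle `μ`. -/
def IsInfIterate (mu : Λ.Path) (x : (Fin k → ℕ) → (Fin k → ℕ) → Λ.Path) : Prop :=
  Λ.IsPathFun (Λ.degInf mu) x ∧ x 0 0 = Λ.r mu ∧
    ∀ n : ℕ, x (n • Λ.d mu) ((n + 1) • Λ.d mu) = mu

/-- Membership in `Λ^{≤ n}`. -/
def LePath (n : Fin k → ℕ) (lam : Λ.Path) : Prop :=
  Λ.d lam ≤ n ∧
    ∀ i, Λ.d lam i < n i → ∀ e, ¬(Λ.r e = Λ.s lam ∧ Λ.d e = Pi.single i 1)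

/-- Minimal common extensions computed inside a subset `S` of `Λ` (all data lying in `S`). -/
def MCEWithin (S : Set Λ.Path) (mu nu : Λ.Path) : Set Λ.Path :=
  {lam | lam ∈ S ∧ Λ.d lam = Λ.d mu ⊔ Λ.d nu ∧
    (∃ α ∈ S, Λ.s mu = Λ.r α ∧ Λ.comp mu α = lam) ∧
    (∃ β ∈ S, Λ.s nu = Λ.r β ∧ Λ.comp nu β = lam)}

/-- Generalised cycles of the sub-`k`-graph determined by a subset `S` of `Λ`. -/
def IsGenCycleWithin (S : Set Λ.Path) (mu nu : Λ.Path) : Prop :=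
  mu ≠ nu ∧ Λ.s mu = Λ.s nu ∧ Λ.r mu = Λ.r nu ∧
    ∀ τ ∈ S, Λ.r τ = Λ.s mu → (Λ.MCEWithin S (Λ.comp mu τ) nu).Nonempty

end KGraph

/-- A Cuntz–Krieger `Λ`-family in a `*`-ring `B`: (CK1) the vertex elements are mutually
orthogonal projections, (CK2) multiplicativity, (CK3) the Cuntz–Krieger relation for
`t_μ* t_ν`, and (CK4) the exhaustivity relation (stated for an arbitrary ordering of the
finite exhaustive set). -/
structure CKFamily {k : ℕ} (Λ : KGraph k) (B : Type*) [NonUnitalRing B] [StarRing B] where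
  t : Λ.Path → B
  selfadjoint : ∀ v, Λ.IsVertex v → star (t v) = t v
  idem : ∀ v, Λ.IsVertex v → t v * t v = t v
  orth : ∀ v w, Λ.IsVertex v → Λ.IsVertex w → v ≠ w → t v * t w = 0
  mul_eq : ∀ mu nu, Λ.s mu = Λ.r nu → t mu * t nu = t (Λ.comp mu nu)
  ck3 : ∀ mu nu, star (t mu) * t nu = ∑ᶠ p ∈ Λ.MCEPairs mu nu, t p.1 * star (t p.2)
  ck4 : ∀ v, Λ.IsVertex v → ∀ (a : Λ.Path) (l : List Λ.Path), (a :: l).Nodup →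
    (∀ lam ∈ a :: l, Λ.r lam = v) → Λ.Exhaustive v {lam | lam ∈ a :: l} →
    (l.map fun lam => t v - t lam * star (t lam)).foldl (· * ·)
      (t v - t a * star (t a)) = 0

/-- A C*-algebra is AF (approximately finite-dimensional) if it contains an increasing
sequence of finite-dimensional `*`-subalgebras whose union is dense. -/
def IsAF (A : Type*) [NonUnitalNormedRing A] [StarRing A] [NormedSpace ℂ A] : Prop :=
  ∃ S : ℕ → NonUnitalStarSubalgebra ℂ A, Monotone S ∧
    (∀ n, FiniteDimensional ℂ (S n)) ∧ Dense (⋃ n, (S n : Set A))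

/-- A closed `*`-subalgebra of `A`, presented as a subset `S`, is AF if it contains an
increasing sequence of finite-dimensional `*`-subalgebras of `A` whose union is dense in `S`. -/
def IsAFIn (A : Type*) [NonUnitalNormedRing A] [StarRing A] [NormedSpace ℂ A]
    (S : Set A) : Prop :=
  ∃ T : ℕ → NonUnitalStarSubalgebra ℂ A, Monotone T ∧ (∀ n, (T n : Set A) ⊆ S) ∧
    (∀ n, FiniteDimensional ℂ (T n)) ∧ ∀ x ∈ S, x ∈ closure (⋃ n, (T n : Set A))

/-! Write `p_λ = t_λ t_λ*`. The computations for `w = t_ν t_μ*` only use `t_λ* t_λ = t_{s(λ)}`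
and `s(μ) = s(ν)`. The heart of the matter is `p_ν t_μ = t_μ`: every `α` with `μα ∈ MCE(μ, ν)`
satisfies `p_ν t_{μα} = t_{μα}`, and since `(μ, ν)` is a generalised cycle these `α` form a finite
exhaustive subset of `s(μ)Λ`, so (CK4) forces `t_μ − p_ν t_μ`, which is killed by every `p_α`, to
vanish. Hence `p_μ ≤ p_ν`, so `p_ν − p_μ` is a projection; it dominates `p_{ντ}` because `p_μ`
is orthogonal to `p_{ντ}` for the entrance `τ`, and `p_{ντ} ≠ 0` because
`t_{ντ}* t_{ντ} = t_{s(τ)} ≠ 0`. -/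

namespace KGraph

variable {k : ℕ} (Λ : KGraph k)

theorem eq_s_of_d_comp_eq {mu α : Λ.Path} (h : Λ.s mu = Λ.r α)
    (hd : Λ.d (Λ.comp mu α) = Λ.d mu) : α = Λ.s mu := by
  have hα : Λ.d α = 0 := by
    rw [Λ.d_comp mu α h] at hd
    exact add_eq_left.mp hd
  rw [h, Λ.r_vertex α hα]

theorem comp_inj {a₁ a₂ b₁ b₂ : Λ.Path} (ha : Λ.s a₁ = Λ.r a₂) (hb : Λ.s b₁ = Λ.r b₂)
    (hd : Λ.d a₁ = Λ.d b₁) (h : Λ.comp a₁ a₂ = Λ.comp b₁ b₂) : a₁ = b₁ ∧ a₂ = b₂ := by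
  have hd₂ : Λ.d b₂ = Λ.d a₂ := by
    have := Λ.d_comp a₁ a₂ ha
    rw [h, Λ.d_comp b₁ b₂ hb, hd] at this
    exact add_left_cancel this
  have := (Λ.factor _ _ _ (Λ.d_comp a₁ a₂ ha)).unique (y₁ := (a₁, a₂)) (y₂ := (b₁, b₂))
    ⟨rfl, rfl, ha, rfl⟩ ⟨hd.symm, hd₂, hb, h.symm⟩
  exact Prod.ext_iff.mp this

theorem exists_factor_of_le (g : Λ.Path) {n : Fin k → ℕ} (hn : n ≤ Λ.d g) :
    ∃ g₁ g₂, Λ.d g₁ = n ∧ Λ.s g₁ = Λ.r g₂ ∧ Λ.comp g₁ g₂ = g ∧ Λ.r g₁ = Λ.r g := by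
  obtain ⟨⟨g₁, g₂⟩, ⟨hd, -, hs, hg⟩, -⟩ := Λ.factor g n (Λ.d g - n) (add_tsub_cancel_of_le hn).symm
  exact ⟨g₁, g₂, hd, hs, hg, hg ▸ (Λ.r_comp g₁ g₂ hs).symm⟩

theorem exists_MCE_of_comp_eq {mu nu g e : Λ.Path} (hg : Λ.s mu = Λ.r g)
    (he : Λ.s nu = Λ.r e) (h : Λ.comp mu g = Λ.comp nu e) :
    ∃ a, Λ.s mu = Λ.r a ∧ Λ.comp mu a ∈ Λ.MCE mu nu ∧
      ∃ ρ, Λ.s a = Λ.r ρ ∧ Λ.comp a ρ = g := by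
  set m := Λ.d mu ⊔ Λ.d nu
  have hdg : Λ.d mu + Λ.d g = Λ.d nu + Λ.d e := by
    rw [← Λ.d_comp mu g hg, ← Λ.d_comp nu e he, h]
  have hm : m ≤ Λ.d mu + Λ.d g := sup_le le_self_add (hdg ▸ le_self_add)
  obtain ⟨g₁, g₂, hdg₁, hs₁, rfl, hr₁⟩ :=
    Λ.exists_factor_of_le g (n := m - Λ.d mu) (tsub_le_iff_left.mpr hm)
  obtain ⟨e₁, e₂, hde₁, hs₂, rfl, hr₂⟩ :=
    Λ.exists_factor_of_le e (n := m - Λ.d nu) (tsub_le_iff_left.mpr (hdg ▸ hm))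
  rw [← hr₁] at hg
  rw [← hr₂] at he
  have hdμ : Λ.d (Λ.comp mu g₁) = m := by
    rw [Λ.d_comp mu g₁ hg, hdg₁, add_tsub_cancel_of_le le_sup_left]
  have hdν : Λ.d (Λ.comp nu e₁) = m := by
    rw [Λ.d_comp nu e₁ he, hde₁, add_tsub_cancel_of_le le_sup_right]
  rw [← Λ.comp_assoc _ _ _ hg hs₁, ← Λ.comp_assoc _ _ _ he hs₂] at h
  obtain ⟨hμν, -⟩ := Λ.comp_inj ((Λ.s_comp _ _ hg).trans hs₁) ((Λ.s_comp _ _ he).trans hs₂)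
    (hdμ.trans hdν.symm) h
  exact ⟨g₁, hg, ⟨hdμ, ⟨g₁, hg, rfl⟩, ⟨e₁, he, hμν.symm⟩⟩, g₂, hs₁, rfl⟩

theorem MCE_nonempty_of_comp_eq {mu nu g e : Λ.Path} (hg : Λ.s mu = Λ.r g)
    (he : Λ.s nu = Λ.r e) (h : Λ.comp mu g = Λ.comp nu e) : (Λ.MCE mu nu).Nonempty := by
  obtain ⟨a, -, ha, -⟩ := Λ.exists_MCE_of_comp_eq hg he h
  exact ⟨_, ha⟩

theorem MCEPairs_self (lam : Λ.Path) : Λ.MCEPairs lam lam = {(Λ.s lam, Λ.s lam)} := by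
  have hs : Λ.s lam = Λ.r (Λ.s lam) := (Λ.r_vertex _ (Λ.d_s lam)).symm
  ext ⟨α, β⟩
  simp only [MCEPairs, MCE, Set.mem_ofPred_eq, Set.mem_singleton_iff, Prod.mk.injEq, sup_idem]
  constructor
  · rintro ⟨hα, hβ, hαβ, hd, -⟩
    exact ⟨Λ.eq_s_of_d_comp_eq hα hd, Λ.eq_s_of_d_comp_eq hβ (hαβ ▸ hd)⟩
  · rintro ⟨rfl, rfl⟩
    rw [Λ.comp_id]
    exact ⟨hs, hs, rfl, rfl, ⟨_, hs, Λ.comp_id lam⟩, ⟨_, hs, Λ.comp_id lam⟩⟩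

theorem mem_Ext_singleton {mu nu α : Λ.Path} :
    α ∈ Λ.Ext mu {nu} ↔ Λ.r α = Λ.s mu ∧ Λ.comp mu α ∈ Λ.MCE mu nu := by
  simp [Ext]

theorem Ext_singleton_finite {mu nu : Λ.Path} (h : (Λ.MCE mu nu).Finite) :
    (Λ.Ext mu {nu}).Finite := by
  refine Set.Finite.of_finite_image (f := Λ.comp mu) (h.subset ?_) ?_
  · rintro _ ⟨α, hα, rfl⟩
    exact (Λ.mem_Ext_singleton.mp hα).2
  · intro a ha b hb hab
    exact (Λ.comp_inj (Λ.mem_Ext_singleton.mp ha).1.symm (Λ.mem_Ext_singleton.mp hb).1.symm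
      rfl hab).2

theorem Ext_singleton_exhaustive {mu nu : Λ.Path}
    (h : ∀ τ, Λ.r τ = Λ.s mu → (Λ.MCE (Λ.comp mu τ) nu).Nonempty) :
    Λ.Exhaustive (Λ.s mu) (Λ.Ext mu {nu}) := by
  intro lam hlam
  obtain ⟨-, -, ⟨σ, hσ, hx⟩, ⟨β, hβ, rfl⟩⟩ := h lam hlam
  rw [Λ.s_comp mu lam hlam.symm] at hσ
  rw [Λ.comp_assoc _ _ _ hlam.symm hσ] at hx
  have hr : Λ.s mu = Λ.r (Λ.comp lam σ) := by rw [Λ.r_comp lam σ hσ, hlam]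
  obtain ⟨a, ha, haMCE, ρ, hρ, hρa⟩ := Λ.exists_MCE_of_comp_eq hr hβ hx
  exact ⟨a, Λ.mem_Ext_singleton.mpr ⟨ha.symm, haMCE⟩, Λ.MCE_nonempty_of_comp_eq hσ hρ hρa.symm⟩

end KGraph

theorem mul_foldl_mul_eq_self {M : Type*} [Semigroup M] {y a : M} {L : List M}
    (ha : y * a = y) (hL : ∀ x ∈ L, y * x = y) : y * L.foldl (· * ·) a = y := by
  induction L generalizing a with
  | nil => exact ha
  | cons x L ih =>
    exact ih (by rw [← mul_assoc, ha, hL x List.mem_cons_self])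
      (fun z hz => hL z (List.mem_cons_of_mem x hz))

namespace CKFamily

variable {k : ℕ} {Λ : KGraph k} {B : Type*} [NonUnitalRing B] [StarRing B] (f : CKFamily Λ B)

theorem t_mul_t_s (lam : Λ.Path) : f.t lam * f.t (Λ.s lam) = f.t lam := by
  rw [f.mul_eq _ _ (Λ.r_vertex _ (Λ.d_s lam)).symm, Λ.comp_id]

theorem t_r_mul_t (lam : Λ.Path) : f.t (Λ.r lam) * f.t lam = f.t lam := by
  rw [f.mul_eq _ _ (Λ.s_vertex _ (Λ.d_r lam)), Λ.id_comp]

theorem star_t_mul_t (lam : Λ.Path) : star (f.t lam) * f.t lam = f.t (Λ.s lam) := by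
  have hv : Λ.IsVertex (Λ.s lam) := Λ.d_s lam
  rw [f.ck3, Λ.MCEPairs_self, finsum_mem_singleton, f.selfadjoint _ hv, f.idem _ hv]

theorem star_t_mul_t_eq_zero {mu nu : Λ.Path} (h : Λ.MCE mu nu = ∅) :
    star (f.t mu) * f.t nu = 0 := by
  have : Λ.MCEPairs mu nu = ∅ :=
    Set.eq_empty_of_forall_notMem fun p hp => (h ▸ hp.2.2.2 : _ ∈ (∅ : Set Λ.Path))
  rw [f.ck3, this, finsum_mem_empty]

theorem t_mul_star_t_mul_t (lam : Λ.Path) : f.t lam * star (f.t lam) * f.t lam = f.t lam := by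
  rw [mul_assoc, f.star_t_mul_t, f.t_mul_t_s]

theorem t_mul_star_t_mul_t_comp {nu β : Λ.Path} (h : Λ.s nu = Λ.r β) :
    f.t nu * star (f.t nu) * f.t (Λ.comp nu β) = f.t (Λ.comp nu β) := by
  rw [← f.mul_eq nu β h, ← mul_assoc, f.t_mul_star_t_mul_t]

theorem isStarProjection_t_mul_star_t (lam : Λ.Path) :
    IsStarProjection (f.t lam * star (f.t lam)) where
  isIdempotentElem := by rw [IsIdempotentElem, ← mul_assoc, f.t_mul_star_t_mul_t]
  isSelfAdjoint := by rw [IsSelfAdjoint, star_mul, star_star]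

theorem t_mul_star_t_mul_star_self {mu nu : Λ.Path} (h : Λ.s mu = Λ.s nu) :
    f.t nu * star (f.t mu) * star (f.t nu * star (f.t mu)) = f.t nu * star (f.t nu) := by
  rw [star_mul, star_star, mul_assoc, ← mul_assoc (star (f.t mu)), f.star_t_mul_t, h,
    ← mul_assoc, f.t_mul_t_s]

theorem eq_zero_of_mul_eq_zero_of_exhaustive {v : Λ.Path} (hv : Λ.IsVertex v)
    {F : Set Λ.Path} (hF : F.Finite) (hFv : ∀ lam ∈ F, Λ.r lam = v) (hex : Λ.Exhaustive v F)
    {y : B} (hy : y * f.t v = y) (hyF : ∀ lam ∈ F, y * (f.t lam * star (f.t lam)) = 0) :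
    y = 0 := by
  obtain ⟨lam₀, hlam₀, -⟩ := hex v (Λ.r_vertex v hv)
  obtain ⟨a, l, hal⟩ := List.exists_cons_of_ne_nil (l := hF.toFinset.toList)
    (Finset.toList_eq_nil.not.mpr (hF.toFinset_nonempty.mpr ⟨lam₀, hlam₀⟩).ne_empty)
  have hmem : ∀ x, x ∈ a :: l ↔ x ∈ F := by simp [← hal]
  have hck4 := f.ck4 v hv a l (hal ▸ hF.toFinset.nodup_toList)
    (fun x hx => hFv x ((hmem x).mp hx)) (fun x hx => by simpa [hmem] using hex x hx)
  have hyx : ∀ x ∈ F, y * (f.t v - f.t x * star (f.t x)) = y := fun x hx => by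
    rw [mul_sub, hy, hyF x hx, sub_zero]
  have := mul_foldl_mul_eq_self (hyx a ((hmem a).mp List.mem_cons_self)) (L := l.map _)
    (by
      simp only [List.mem_map]
      rintro _ ⟨x, hx, rfl⟩
      exact hyx x ((hmem x).mp (List.mem_cons_of_mem a hx)))
  rwa [hck4, mul_zero, eq_comm] at this

theorem t_mul_star_t_mul_t_of_forall_MCE_nonempty {mu nu : Λ.Path}
    (hfin : (Λ.MCE mu nu).Finite)
    (hext : ∀ τ, Λ.r τ = Λ.s mu → (Λ.MCE (Λ.comp mu τ) nu).Nonempty) :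
    f.t nu * star (f.t nu) * f.t mu = f.t mu := by
  refine (sub_eq_zero.mp (f.eq_zero_of_mul_eq_zero_of_exhaustive (Λ.d_s mu)
    (Λ.Ext_singleton_finite hfin) (fun α hα => (Λ.mem_Ext_singleton.mp hα).1)
    (Λ.Ext_singleton_exhaustive hext) ?_ ?_)).symm
  · rw [sub_mul, f.t_mul_t_s, mul_assoc, f.t_mul_t_s]
  · intro α hα
    obtain ⟨hα, -, -, β, hβ, hμα⟩ := Λ.mem_Ext_singleton.mp hα
    rw [sub_mul, mul_assoc, ← mul_assoc (f.t mu), f.mul_eq _ _ hα.symm, ← hμα,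
      ← mul_assoc (f.t nu * star (f.t nu)), f.t_mul_star_t_mul_t_comp hβ, sub_self]

end CKFamily

/-- Corollary 3.8. If `(μ, ν)` is a generalised cycle with an entrance `τ`
and `{t_λ}` is a Cuntz–Krieger family with `t_{s(τ)} ≠ 0`, then `t_ν t_ν*` is an infinite
projection, via the partial isometry `w = t_ν t_μ*`.  Here `B` carries its canonical partial
order, encoded by `[PartialOrder B] [StarOrderedRing B]`. -/
theorem stmt6 {k : ℕ} (Λ : KGraph k) (hFA : Λ.FinitelyAligned)
    (mu nu τ : Λ.Path) (hgc : Λ.IsGenCycle mu nu) (hτ : Λ.IsEntrance mu nu τ)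
    (B : Type*) [NonUnitalCStarAlgebra B] [PartialOrder B] [StarOrderedRing B]
    (f : CKFamily Λ B) (hnz : f.t (Λ.s τ) ≠ 0) :
    (f.t nu * star (f.t mu)) * star (f.t nu * star (f.t mu)) * (f.t nu * star (f.t mu)) =
        f.t nu * star (f.t mu) ∧
    star (f.t nu * star (f.t mu)) * (f.t nu * star (f.t mu)) = f.t mu * star (f.t mu) ∧
    (f.t nu * star (f.t mu)) * star (f.t nu * star (f.t mu)) = f.t nu * star (f.t nu) ∧
    f.t mu * star (f.t mu) ≤ f.t nu * star (f.t nu) ∧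
    f.t mu * star (f.t mu) ≠ f.t nu * star (f.t nu) ∧
    f.t (Λ.comp nu τ) * star (f.t (Λ.comp nu τ)) ≤
        f.t nu * star (f.t nu) - f.t mu * star (f.t mu) ∧
    f.t (Λ.comp nu τ) * star (f.t (Λ.comp nu τ)) ≠ 0 ∧
    0 ≤ f.t (Λ.comp nu τ) * star (f.t (Λ.comp nu τ)) := by
  obtain ⟨-, hs, -, hext⟩ := hgc
  obtain ⟨hτν, hent⟩ := hτ
  have hP := f.isStarProjection_t_mul_star_t
  have hww := f.t_mul_star_t_mul_star_self hs
  have hνμ : f.t nu * star (f.t nu) * (f.t mu * star (f.t mu)) = f.t mu * star (f.t mu) := by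
    rw [← mul_assoc, f.t_mul_star_t_mul_t_of_forall_MCE_nonempty (hFA mu nu) hext]
  have hμντ : f.t mu * star (f.t mu) * f.t (Λ.comp nu τ) = 0 := by
    have := congrArg star (f.star_t_mul_t_eq_zero hent)
    rw [star_mul, star_star, star_zero] at this
    rw [mul_assoc, this, mul_zero]
  have hQ : (f.t nu * star (f.t nu) - f.t mu * star (f.t mu)) *
      (f.t (Λ.comp nu τ) * star (f.t (Λ.comp nu τ))) =
      f.t (Λ.comp nu τ) * star (f.t (Λ.comp nu τ)) := by
    rw [sub_mul, ← mul_assoc, ← mul_assoc, f.t_mul_star_t_mul_t_comp hτν.symm, hμντ, zero_mul,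
      sub_zero]
  have hντ : f.t (Λ.comp nu τ) * star (f.t (Λ.comp nu τ)) ≠ 0 := fun h => hnz <| by
    rw [← Λ.s_comp nu τ hτν.symm, ← f.star_t_mul_t,
      (CStarRing.mul_star_self_eq_zero_iff _).mp h, mul_zero]
  have hwsw : star (f.t nu * star (f.t mu)) * (f.t nu * star (f.t mu)) =
      f.t mu * star (f.t mu) := by
    simpa only [star_mul, star_star] using f.t_mul_star_t_mul_star_self hs.symm
  have hwwsw : f.t nu * star (f.t mu) * star (f.t nu * star (f.t mu)) *
      (f.t nu * star (f.t mu)) = f.t nu * star (f.t mu) := by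
    rw [hww, ← mul_assoc, f.t_mul_star_t_mul_t]
  refine ⟨hwwsw, hwsw, hww, (hP mu).le_of_mul_eq_right (hP nu) hνμ, fun h => hντ ?_,
    (hP _).le_of_mul_eq_right ((hP mu).sub_of_mul_eq_right (hP nu) hνμ) hQ, hντ, (hP _).nonneg⟩
  rw [← hQ, h, sub_self, zero_mul]
end

section
/- Let Λ be a finitely aligned k-graph and let H ⊆ Λ⁰ be hereditary, i.e. v ∈ H and λ ∈ vΛ imply s(λ) ∈ H. Set ΛH := {λ ∈ Λ : s(λ) ∈ H}. Then Λ ∖ ΛH is a sub-k-graph of Λ (a subcategory closed under the factorisations of its members, with the restricted degree functor), for μ, ν ∈ Λ ∖ ΛH the minimal common extensions computed in Λ ∖ ΛH satisfy MCE_{Λ∖ΛH}(μ, ν) = MCE_Λ(μ, ν) ∖ ΛH, and a pair (μ, ν) ∈ (Λ ∖ ΛH) × (Λ ∖ ΛH) is a generalised cycle in the k-graph Λ ∖ ΛH if and only if d(μ) ≠ d(ν), s(μ) = s(ν), r(μ) = r(ν), and for every τ ∈ s(μ)Λ with s(τ) ∉ H the set MCE_Λ(ν, μτ) ∖ ΛH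 is nonempty. -/
open scoped ComplexOrder ENat

namespace KGraph

variable {k : ℕ} (Λ : KGraph k)

lemma s_r (lam : Λ.Path) : Λ.s (Λ.r lam) = Λ.r lam := Λ.s_vertex _ (Λ.d_r lam)

lemma s_s (lam : Λ.Path) : Λ.s (Λ.s lam) = Λ.s lam := Λ.s_vertex _ (Λ.d_s lam)

lemma r_s (lam : Λ.Path) : Λ.r (Λ.s lam) = Λ.s lam := Λ.r_vertex _ (Λ.d_s lam)

lemma MCE_comm (mu nu : Λ.Path) : Λ.MCE mu nu = Λ.MCE nu mu := by
  ext lam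
  constructor <;> rintro ⟨hd, hmu, hnu⟩ <;> exact ⟨by rw [hd, sup_comm], hnu, hmu⟩

lemma comp_eq_self_of_d_comp_eq {mu α : Λ.Path} (hc : Λ.s mu = Λ.r α)
    (hd : Λ.d (Λ.comp mu α) = Λ.d mu) : Λ.comp mu α = mu := by
  have hα : Λ.d α = 0 := by
    have h := Λ.d_comp mu α hc
    rw [hd] at h
    exact left_eq_add.mp h
  rw [← Λ.r_vertex α hα, ← hc, Λ.comp_id]

lemma eq_of_mem_MCE_of_d_eq {mu nu lam : Λ.Path} (hlam : lam ∈ Λ.MCE mu nu)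
    (hd : Λ.d mu = Λ.d nu) : mu = nu := by
  obtain ⟨hdl, ⟨α, hα, rfl⟩, ⟨β, hβ, hβl⟩⟩ := hlam
  have hmu : Λ.comp mu α = mu :=
    Λ.comp_eq_self_of_d_comp_eq hα (by rw [hdl, hd, sup_idem])
  have hnu : Λ.comp nu β = nu :=
    Λ.comp_eq_self_of_d_comp_eq hβ (by rw [hβl, hdl, hd, sup_idem])
  rw [← hmu, ← hβl, hnu]

section Hereditary

variable {H : Set Λ.Path}

lemma r_notMem_of_s_notMem (hher : ∀ v ∈ H, ∀ lam, Λ.r lam = v → Λ.s lam ∈ H)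
    {lam : Λ.Path} (h : Λ.s lam ∉ H) : Λ.r lam ∉ H :=
  fun hr => h (hher _ hr lam rfl)

lemma s_comp_notMem {mu nu : Λ.Path} (hc : Λ.s mu = Λ.r nu) (h : Λ.s nu ∉ H) :
    Λ.s (Λ.comp mu nu) ∉ H := by
  rwa [Λ.s_comp mu nu hc]

lemma exists_factor_s_notMem (hher : ∀ v ∈ H, ∀ lam, Λ.r lam = v → Λ.s lam ∈ H)
    {lam : Λ.Path} (h : Λ.s lam ∉ H) {m n : Fin k → ℕ} (hd : Λ.d lam = m + n) :
    ∃ mu nu : Λ.Path, Λ.s mu ∉ H ∧ Λ.s nu ∉ H ∧ Λ.d mu = m ∧ Λ.d nu = n ∧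
      Λ.s mu = Λ.r nu ∧ Λ.comp mu nu = lam := by
  obtain ⟨⟨mu, nu⟩, ⟨hdm, hdn, hc, rfl⟩, -⟩ := Λ.factor lam m n hd
  rw [Λ.s_comp mu nu hc] at h
  exact ⟨mu, nu, hc ▸ Λ.r_notMem_of_s_notMem hher h, h, hdm, hdn, hc, rfl⟩

lemma MCEWithin_setOf_s_notMem (mu nu : Λ.Path) :
    Λ.MCEWithin {lam | Λ.s lam ∉ H} mu nu = Λ.MCE mu nu \ {lam | Λ.s lam ∈ H} := by
  ext lam
  constructor
  · rintro ⟨hlam, hd, ⟨α, -, hα⟩, ⟨β, -, hβ⟩⟩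
    exact ⟨⟨hd, ⟨α, hα⟩, ⟨β, hβ⟩⟩, hlam⟩
  · rintro ⟨⟨hd, ⟨α, hα, rfl⟩, ⟨β, hβ, hβl⟩⟩, hlam⟩
    have hsβ : Λ.s β = Λ.s (Λ.comp mu α) := by rw [← hβl, Λ.s_comp nu β hβ]
    refine ⟨hlam, hd, ⟨α, ?_, hα, rfl⟩, ⟨β, ?_, hβ, hβl⟩⟩
    · rwa [Set.mem_ofPred_eq, ← Λ.s_comp mu α hα]
    · rwa [Set.mem_ofPred_eq, hsβ]

/-- In the forward direction, `d μ = d ν` is excluded by testing the cycle condition at the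
trivial extension `τ = s μ`. -/
lemma isGenCycleWithin_setOf_s_notMem_iff {mu nu : Λ.Path} (hmu : Λ.s mu ∉ H) :
    Λ.IsGenCycleWithin {lam | Λ.s lam ∉ H} mu nu ↔
      Λ.d mu ≠ Λ.d nu ∧ Λ.s mu = Λ.s nu ∧ Λ.r mu = Λ.r nu ∧
        ∀ τ, Λ.r τ = Λ.s mu → Λ.s τ ∉ H →
          (Λ.MCE nu (Λ.comp mu τ) \ {lam | Λ.s lam ∈ H}).Nonempty := by
  simp only [IsGenCycleWithin, MCEWithin_setOf_s_notMem, MCE_comm Λ nu, Set.mem_ofPred_eq]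
  constructor
  · rintro ⟨hne, hs, hr, hcyc⟩
    refine ⟨fun hd => hne ?_, hs, hr, fun τ hτ hτH => hcyc τ hτH hτ⟩
    obtain ⟨lam, hlam, -⟩ := hcyc (Λ.s mu) (by rwa [s_s]) (Λ.r_s mu)
    rw [Λ.comp_id] at hlam
    exact Λ.eq_of_mem_MCE_of_d_eq hlam hd
  · rintro ⟨hd, hs, hr, hcyc⟩
    exact ⟨fun h => hd (congrArg Λ.d h), hs, hr, fun τ hτH hτ => hcyc τ hτ hτH⟩

end Hereditary

end KGraph

theorem stmt7_general {k : ℕ} (Λ : KGraph k)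
    (H : Set Λ.Path)
    (hher : ∀ v ∈ H, ∀ lam, Λ.r lam = v → Λ.s lam ∈ H) :
    -- `Λ ∖ ΛH` is a sub-`k`-graph: closed under range, source, composition and factorisation
    (∀ lam : Λ.Path, Λ.s lam ∉ H → Λ.r lam ∉ H ∧ Λ.s (Λ.r lam) ∉ H ∧ Λ.s (Λ.s lam) ∉ H) ∧
    (∀ mu nu : Λ.Path, Λ.s mu = Λ.r nu → Λ.s nu ∉ H → Λ.s (Λ.comp mu nu) ∉ H) ∧
    (∀ lam : Λ.Path, Λ.s lam ∉ H → ∀ m n : Fin k → ℕ, Λ.d lam = m + n →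
      ∃ mu nu : Λ.Path, Λ.s mu ∉ H ∧ Λ.s nu ∉ H ∧ Λ.d mu = m ∧ Λ.d nu = n ∧
        Λ.s mu = Λ.r nu ∧ Λ.comp mu nu = lam) ∧
    -- minimal common extensions in the sub-`k`-graph
    (∀ mu nu : Λ.Path, Λ.s mu ∉ H → Λ.s nu ∉ H →
      Λ.MCEWithin {lam | Λ.s lam ∉ H} mu nu =
        Λ.MCE mu nu \ {lam : Λ.Path | Λ.s lam ∈ H}) ∧
    -- characterisation of generalised cycles of the sub-`k`-graph
    (∀ mu nu : Λ.Path, Λ.s mu ∉ H → Λ.s nu ∉ H →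
      (Λ.IsGenCycleWithin {lam | Λ.s lam ∉ H} mu nu ↔
        (Λ.d mu ≠ Λ.d nu ∧ Λ.s mu = Λ.s nu ∧ Λ.r mu = Λ.r nu ∧
          ∀ τ, Λ.r τ = Λ.s mu → Λ.s τ ∉ H →
            (Λ.MCE nu (Λ.comp mu τ) \ {lam : Λ.Path | Λ.s lam ∈ H}).Nonempty))) := by
  refine ⟨fun lam h => ?_, fun mu nu hc h => Λ.s_comp_notMem hc h,
    fun lam h m n hd => Λ.exists_factor_s_notMem hher h hd,
    fun mu nu _ _ => Λ.MCEWithin_setOf_s_notMem mu nu,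
    fun mu nu hmu _ => Λ.isGenCycleWithin_setOf_s_notMem_iff hmu⟩
  have hr := Λ.r_notMem_of_s_notMem hher h
  rw [Λ.s_r, Λ.s_s]
  exact ⟨hr, hr, h⟩

/-- from Corollary 3.11. For a hereditary set `H` of vertices,
`G = Λ ∖ ΛH` is a sub-`k`-graph, its minimal common extensions are
`MCE_Λ(μ,ν) ∖ ΛH`, and its generalised cycles are characterised as stated. -/
theorem stmt7 {k : ℕ} (Λ : KGraph k) (hFA : Λ.FinitelyAligned)
    (H : Set Λ.Path) (hH : ∀ v ∈ H, Λ.IsVertex v)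
    (hher : ∀ v ∈ H, ∀ lam, Λ.r lam = v → Λ.s lam ∈ H) :
    -- `Λ ∖ ΛH` is a sub-`k`-graph: closed under range, source, composition and factorisation
    (∀ lam : Λ.Path, Λ.s lam ∉ H → Λ.r lam ∉ H ∧ Λ.s (Λ.r lam) ∉ H ∧ Λ.s (Λ.s lam) ∉ H) ∧
    (∀ mu nu : Λ.Path, Λ.s mu = Λ.r nu → Λ.s nu ∉ H → Λ.s (Λ.comp mu nu) ∉ H) ∧
    (∀ lam : Λ.Path, Λ.s lam ∉ H → ∀ m n : Fin k → ℕ, Λ.d lam = m + n →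
      ∃ mu nu : Λ.Path, Λ.s mu ∉ H ∧ Λ.s nu ∉ H ∧ Λ.d mu = m ∧ Λ.d nu = n ∧
        Λ.s mu = Λ.r nu ∧ Λ.comp mu nu = lam) ∧
    -- minimal common extensions in the sub-`k`-graph
    (∀ mu nu : Λ.Path, Λ.s mu ∉ H → Λ.s nu ∉ H →
      Λ.MCEWithin {lam | Λ.s lam ∉ H} mu nu =
        Λ.MCE mu nu \ {lam : Λ.Path | Λ.s lam ∈ H}) ∧
    -- characterisation of generalised cycles of the sub-`k`-graph
    (∀ mu nu : Λ.Path, Λ.s mu ∉ H → Λ.s nu ∉ H →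
      (Λ.IsGenCycleWithin {lam | Λ.s lam ∉ H} mu nu ↔
        (Λ.d mu ≠ Λ.d nu ∧ Λ.s mu = Λ.s nu ∧ Λ.r mu = Λ.r nu ∧
          ∀ τ, Λ.r τ = Λ.s mu → Λ.s τ ∉ H →
            (Λ.MCE nu (Λ.comp mu τ) \ {lam : Λ.Path | Λ.s lam ∈ H}).Nonempty))) :=
  stmt7_general Λ H hher
end
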